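/- arXiv:1507.07778 — 7 statements merged into one kernel-verified Lean document; each statement's English description precedes it below -/
import Mathlib

section
/- Let Γ be a finitely generated group with finitely generated center. If Γ₁, Γ₂ are element-wise commuting subgroups of Γ such that Γ₁ ∪ Γ₂ generates Γ, then each of Γ₁ and Γ₂ is finitely generated. -/
/-!
Since `Γ₁` centralizes `Γ₂` and `Γ₁ ⊔ Γ₂ = Γ`, the subgroup `Γ₂` is normal and `Γ₁ ⊓ Γ₂` is central.
Hence `Γ₁` is an extension of `Γ₁ ⊓ Γ₂` by `Γ₁ / (Γ₁ ⊓ Γ₂) ≅ Γ / Γ₂`. The quotient is finitely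
generated as a quotient of `Γ`, and `Γ₁ ⊓ Γ₂` is finitely generated as a subgroup of the finitely
generated abelian group `C(Γ)`; an extension of finitely generated groups is finitely generated.
-/

open Subgroup

section

variable {G G' : Type*} [Group G] [Group G']

theorem Subgroup.FG.map {P : Subgroup G} (h : P.FG) (f : G →* G') : (P.map f).FG := by
  rw [fg_iff_submonoid_fg] at h ⊢
  exact h.map f

theorem Subgroup.FG.of_map_injective {P : Subgroup G} {f : G →* G'} (hf : Function.Injective f)
    (h : (P.map f).FG) : P.FG := by
  rw [fg_iff_submonoid_fg] at h ⊢
  exact h.map_injective f hf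

theorem Subgroup.fg_of_commGroup {A : Type*} [CommGroup A] [Group.FG A] (K : Subgroup A) :
    K.FG := by
  have : IsNoetherian ℤ (Additive A) := isNoetherian_of_isNoetherianRing_of_finite ℤ _
  rw [fg_iff_add_fg, ← AddSubgroup.toIntSubmodule_toAddSubgroup K.toAddSubgroup,
    ← Submodule.fg_iff_addSubgroup_fg]
  exact IsNoetherian.noetherian _

theorem Subgroup.fg_of_le_center [Group.FG (center G)] {H : Subgroup G}
    (hH : H ≤ center G) : H.FG := by
  let : CommGroup (center G) := { (inferInstance : Group (center G)) with mul_comm := mul_comm' }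
  have := ((H.subgroupOf (center G)).fg_of_commGroup).map (center G).subtype
  rwa [subgroupOf_map_subtype, inf_eq_left.2 hH] at this

theorem Group.fg_of_surjective_of_ker_fg [Group.FG G'] {f : G →* G'}
    (hf : Function.Surjective f) (hker : f.ker.FG) : Group.FG G := by
  obtain ⟨S, hS, hSfin⟩ := (Subgroup.fg_iff _).1 (Group.fg_def.1 ‹_›)
  choose g hg using hf
  have hmap : (closure (g '' S)).map f = ⊤ := by
    rw [MonoidHom.map_closure, Set.image_image]
    simpa [hg] using hS
  have htop : closure (g '' S) ⊔ f.ker = ⊤ := by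
    rw [← comap_map_eq, hmap, comap_top]
  rw [Group.fg_def, ← htop]
  exact ((Subgroup.fg_iff _).2 ⟨_, rfl, hSfin.image g⟩).sup hker

theorem Subgroup.fg_of_sup_eq_top [Group.FG G] {H N : Subgroup G} [N.Normal]
    (hsup : H ⊔ N = ⊤) (hinf : (H ⊓ N).FG) : H.FG := by
  let f := (QuotientGroup.mk' N).comp H.subtype
  have hsurj : Function.Surjective f := by
    intro q
    obtain ⟨g, rfl⟩ := QuotientGroup.mk'_surjective N q
    obtain ⟨h, hh, n, hn, rfl⟩ := mem_sup_of_normal_right.1 (hsup ▸ mem_top g)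
    exact ⟨⟨h, hh⟩, by simpa [f, QuotientGroup.eq] using hn⟩
  have hker : f.ker.FG := by
    refine FG.of_map_injective H.subtype_injective ?_
    have hkerf : f.ker = N.subgroupOf H := by ext; simp [f, mem_subgroupOf]
    rwa [hkerf, subgroupOf_map_subtype, inf_comm]
  rw [← Group.fg_iff_subgroup_fg]
  exact Group.fg_of_surjective_of_ker_fg hsurj hker

theorem Subgroup.normal_of_le_centralizer_of_sup_eq_top {H K : Subgroup G}
    (hc : H ≤ centralizer K) (hsup : H ⊔ K = ⊤) : K.Normal := by
  rw [← normalizer_eq_top_iff, eq_top_iff, ← hsup]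
  exact sup_le (hc.trans (centralizer_le_normalizer _)) le_normalizer

theorem Subgroup.inf_le_center_of_le_centralizer_of_sup_eq_top
    {H K : Subgroup G} (hc : H ≤ centralizer K) (hsup : H ⊔ K = ⊤) : H ⊓ K ≤ center G := by
  rw [← centralizer_univ, ← coe_top, le_centralizer_iff, ← hsup, sup_le_iff,
    le_centralizer_iff, le_centralizer_iff (H := K)]
  exact ⟨inf_le_right.trans (le_centralizer_iff.1 hc), inf_le_left.trans hc⟩

theorem Subgroup.fg_of_le_centralizer_of_sup_eq_top [Group.FG G] [Group.FG (center G)]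
    {H K : Subgroup G} (hc : H ≤ centralizer K) (hsup : H ⊔ K = ⊤) : H.FG :=
  have := normal_of_le_centralizer_of_sup_eq_top hc hsup
  fg_of_sup_eq_top hsup (fg_of_le_center (inf_le_center_of_le_centralizer_of_sup_eq_top hc hsup))

end

/-- if a finitely generated group with finitely generated center is
generated by two element-wise commuting subgroups, then each subgroup is
finitely generated. -/
theorem stmt2 {G : Type*} [Group G] (hFG : Group.FG G)
    (hZFG : Group.FG ↥(Subgroup.center G))
    (H₁ H₂ : Subgroup G)
    (hcomm : ∀ a ∈ H₁, ∀ b ∈ H₂, a * b = b * a)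
    (hgen : H₁ ⊔ H₂ = ⊤) :
    H₁.FG ∧ H₂.FG := by
  have hc : H₁ ≤ centralizer H₂ := fun a ha b hb => (hcomm a ha b hb).symm
  exact ⟨fg_of_le_centralizer_of_sup_eq_top hc hgen,
    fg_of_le_centralizer_of_sup_eq_top (le_centralizer_iff.1 hc) (sup_comm H₁ H₂ ▸ hgen)⟩
end

section
/- Let Γ be a finitely generated torsion-free group with finitely generated center. Suppose Γ₁, Γ₂ are element-wise commuting subgroups of Γ with Γ₁ ∪ Γ₂ generating Γ, and suppose Γ₁ has finite index in Γ. Then Γ₂ is isomorphic to ℤ^k for some k ≤ rank of the center of Γ. -/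
/-- `Monoid.IsTorsionFree` as it was defined in Mathlib (Dec 2024); removed since. -/
def Monoid.IsTorsionFree (G : Type*) [Monoid G] : Prop :=
  ∀ g : G, g ≠ 1 → ¬IsOfFinOrder g

open scoped IsMulCommutative

/-!
The elements of `Γ₁` commute with `Γ₂`, so `Γ₁ ∩ Γ₂` is central in `Γ₂` and the center of `Γ₂`
has finite index `n` in `Γ₂`. The transfer `Γ₂ → Z(Γ₂)`, `g ↦ gⁿ`, is then a homomorphism, injective
because `Γ` is torsion-free. The center of `Γ₂` commutes with `Γ₁` and `Γ₂`, hence lies in `Z(Γ)`.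
So `Γ₂` embeds in the finitely generated abelian group `Z(Γ)`: it is abelian, finitely generated and
torsion-free, hence free abelian of rank at most that of `Z(Γ)`. This embedding replaces the appeal
to Schur's theorem.
-/

open Subgroup

theorem Monoid.IsTorsionFree.of_injective {M N : Type*} [Monoid M] [Monoid N] {f : M →* N}
    (hf : Function.Injective f) (hN : Monoid.IsTorsionFree N) : Monoid.IsTorsionFree M :=
  fun g hg hfin => hN (f g) (by rwa [ne_eq, ← map_one f, hf.eq_iff]) (f.isOfFinOrder hfin)

theorem Monoid.IsTorsionFree.injective_transferCenterPow {G : Type*} [Group G]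
    [(center G).FiniteIndex] (hG : Monoid.IsTorsionFree G) :
    Function.Injective (MonoidHom.transferCenterPow G) := by
  refine (injective_iff_map_eq_one _).mpr fun g hg => ?_
  have hpow : g ^ (center G).index = 1 := by
    simpa using congrArg Subtype.val hg
  by_contra hne
  exact hG g hne (isOfFinOrder_iff_pow_eq_one.mpr
    ⟨_, Nat.pos_of_ne_zero FiniteIndex.index_ne_zero, hpow⟩)

namespace Subgroup

variable {G : Type*} [Group G] {H K : Subgroup G}

theorem subgroupOf_le_center_of_le_centralizer (h : H ≤ centralizer K) :
    H.subgroupOf K ≤ center K :=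
  fun _ hx => mem_center_iff.mpr fun y => Subtype.ext (h hx y y.2)

theorem coe_mem_center_of_le_centralizer_of_sup_eq_top (h : H ≤ centralizer K)
    (hHK : H ⊔ K = ⊤) {x : K} (hx : x ∈ center K) : (x : G) ∈ center G := by
  have hle : H ⊔ K ≤ centralizer {(x : G)} := by
    refine sup_le (fun a ha => ?_) (fun b hb => ?_)
    · exact mem_centralizer_singleton_iff.mpr (h ha x x.2).symm
    · exact mem_centralizer_singleton_iff.mpr
        (congrArg Subtype.val (mem_center_iff.mp hx ⟨b, hb⟩))
  rw [hHK, top_le_iff, centralizer_eq_top_iff_subset, Set.singleton_subset_iff] at hle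
  exact hle

end Subgroup

universe u

theorem exists_mulEquiv_fin_int_of_injective {K A : Type u} [Group K] [CommGroup A]
    (hK : Monoid.IsTorsionFree K) (hA : Group.FG A) (f : K →* A) (hf : Function.Injective f) :
    ∃ k : ℕ, Nonempty (K ≃* Multiplicative (Fin k → ℤ)) ∧
      (k : Cardinal) ≤ Module.rank ℤ (Additive A) := by
  let _ : CommGroup K :=
    { ‹Group K› with mul_comm := fun a b => hf (by rw [map_mul, map_mul, mul_comm]) }
  have : IsMulTorsionFree K := IsMulTorsionFree.of_not_isOfFinOrder fun a ha => hK a ha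
  have : Module.Finite ℤ (Additive A) :=
    Module.Finite.iff_addGroup_fg.mpr (GroupFG.iff_add_fg.mp hA)
  let ψ : Additive K →ₗ[ℤ] Additive A := f.toAdditive.toIntLinearMap
  have hψ : Function.Injective ψ := hf
  have : Module.Finite ℤ (Additive K) := Module.Finite.of_injective ψ hψ
  obtain ⟨k, b⟩ := Module.basisOfFiniteTypeTorsionFree' (R := ℤ) (M := Additive K)
  refine ⟨k, ⟨AddEquiv.toMultiplicativeRight b.equivFun.toAddEquiv⟩, ?_⟩
  calc (k : Cardinal) = Module.rank ℤ (Additive K) := by simpa using b.mk_eq_rank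
    _ ≤ Module.rank ℤ (Additive A) := ψ.rank_le_of_injective hψ

theorem stmt3_general {G : Type*} [Group G]
    (hTF : Monoid.IsTorsionFree G)
    (hZFG : Group.FG ↥(Subgroup.center G))
    (H₁ H₂ : Subgroup G)
    (hcomm : ∀ a ∈ H₁, ∀ b ∈ H₂, a * b = b * a)
    (hgen : H₁ ⊔ H₂ = ⊤)
    (hfi : H₁.FiniteIndex) :
    ∃ k : ℕ, Nonempty (↥H₂ ≃* Multiplicative (Fin k → ℤ)) ∧
      (k : Cardinal) ≤ Module.rank ℤ (Additive ↥(Subgroup.center G)) := by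
  have hcent : H₁ ≤ centralizer H₂ := fun a ha b hb => (hcomm a ha b hb).symm
  have hTF₂ : Monoid.IsTorsionFree H₂ := hTF.of_injective H₂.subtype_injective
  have : (center H₂).FiniteIndex :=
    finiteIndex_of_le (subgroupOf_le_center_of_le_centralizer hcent)
  let ι : center H₂ →* center G := (H₂.subtype.comp (center H₂).subtype).codRestrict _
    fun x => coe_mem_center_of_le_centralizer_of_sup_eq_top hcent hgen x.2
  have hι : Function.Injective ι := fun x y hxy =>
    Subtype.ext (Subtype.ext (congrArg (fun z : center G => (z : G)) hxy))
  exact exists_mulEquiv_fin_int_of_injective hTF₂ hZFG (ι.comp (MonoidHom.transferCenterPow H₂))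
    (hι.comp hTF₂.injective_transferCenterPow)

/-- in a finitely generated torsion-free group with finitely generated
center, if two element-wise commuting subgroups generate the group and one of them has
finite index, then the other is free abelian of rank at most the rank of the center. -/
theorem stmt3 {G : Type*} [Group G] (hFG : Group.FG G)
    (hTF : Monoid.IsTorsionFree G)
    (hZFG : Group.FG ↥(Subgroup.center G))
    (H₁ H₂ : Subgroup G)
    (hcomm : ∀ a ∈ H₁, ∀ b ∈ H₂, a * b = b * a)
    (hgen : H₁ ⊔ H₂ = ⊤)
    (hfi : H₁.FiniteIndex) :
    ∃ k : ℕ, Nonempty (↥H₂ ≃* Multiplicative (Fin k → ℤ)) ∧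
      (k : Cardinal) ≤ Module.rank ℤ (Additive ↥(Subgroup.center G)) :=
  stmt3_general hTF hZFG H₁ H₂ hcomm hgen hfi
end

section
/- Suppose every finite index subgroup of a group Γ has finite center. Then Γ is presentable by products if and only if Γ is infinite-index presentable by products (IIPP). -/
/-- A group is presentable by products. -/
def PresentableByProducts (G : Type*) [Group G] : Prop :=
  ∃ H K : Subgroup G, (∀ a ∈ H, ∀ b ∈ K, a * b = b * a) ∧
    Infinite ↥H ∧ Infinite ↥K ∧ (H ⊔ K).FiniteIndex

/-- A group is infinite-index presentable by products (IIPP). -/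
def IIPP (G : Type*) [Group G] : Prop :=
  ∃ H K : Subgroup G, (∀ a ∈ H, ∀ b ∈ K, a * b = b * a) ∧
    H.index = 0 ∧ K.index = 0 ∧ (H ⊔ K).FiniteIndex

/-!
Let `H` and `K` commute element-wise with `H ⊔ K` of finite index. If `H` had finite index, then
`H ∩ K` would be central in `H`, hence finite, and of finite index in `K`, so `K` would be finite.
Conversely, if `K` were finite, then `H` would have finite index in `H ⊔ K = H K`, hence in the
whole group.
-/

namespace Subgroup

variable {G : Type*} [Group G] {H K : Subgroup G}

theorem relIndex_sup_left_of_le_normalizer (hK : K ≤ normalizer (H : Set G)) :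
    H.relIndex (K ⊔ H) = H.relIndex K :=
  letI := normal_subgroupOf_of_le_normalizer hK
  letI := normal_subgroupOf_sup_of_le_normalizer hK
  Nat.card_congr (QuotientGroup.quotientInfEquivProdNormalizerQuotient K H hK).toEquiv.symm

theorem finiteIndex_of_finite_of_le_normalizer [Finite K] [(K ⊔ H).FiniteIndex]
    (hK : K ≤ normalizer (H : Set G)) : H.FiniteIndex := by
  constructor
  rw [← relIndex_mul_index le_sup_right, relIndex_sup_left_of_le_normalizer hK]
  exact mul_ne_zero (FiniteIndex.index_ne_zero (H := H.subgroupOf K)) FiniteIndex.index_ne_zero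

theorem finite_of_le_centralizer [H.FiniteIndex] [Finite (center H)]
    (hK : K ≤ centralizer (H : Set G)) : Finite K := by
  have hcentral : K.subgroupOf H ≤ center H := fun x hx =>
    mem_center_iff.2 fun g => Subtype.ext (hK hx g g.2)
  have : Finite (K.subgroupOf H) := Finite.of_injective _ (inclusion_injective hcentral)
  have : Finite (H.subgroupOf K) := by
    rw [← inf_subgroupOf_left] at this
    rw [← inf_subgroupOf_right]
    exact Finite.of_equiv _ ((subgroupOfEquivOfLe inf_le_left).trans
      (subgroupOfEquivOfLe inf_le_right).symm).toEquiv
  exact (finite_iff_finite_and_finiteIndex (H.subgroupOf K)).2 ⟨this, inferInstance⟩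

theorem index_eq_zero_of_le_centralizer [Infinite K]
    (hfc : ∀ L : Subgroup G, L.FiniteIndex → Finite (center L))
    (hK : K ≤ centralizer (H : Set G)) : H.index = 0 :=
  not_finiteIndex_iff.mp fun hH => have := hfc H hH; (finite_of_le_centralizer hK).false

theorem infinite_of_index_eq_zero_of_le_normalizer [(K ⊔ H).FiniteIndex] (hH : H.index = 0)
    (hK : K ≤ normalizer (H : Set G)) : Infinite K :=
  not_finite_iff_infinite.mp fun _ =>
    not_finiteIndex_iff.mpr hH (finiteIndex_of_finite_of_le_normalizer hK)

end Subgroup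

open Subgroup in
/-- if every finite index subgroup of `Γ` has finite center, then `Γ` is
presentable by products iff it is IIPP. -/
theorem stmt8 {G : Type*} [Group G]
    (h : ∀ H : Subgroup G, H.FiniteIndex → Finite ↥(Subgroup.center ↥H)) :
    PresentableByProducts G ↔ IIPP G := by
  refine exists₂_congr fun H K => and_congr_right fun hc => ?_
  have hKH : K ≤ centralizer (H : Set G) := fun b hb a ha => hc a ha b hb
  have hHK : H ≤ centralizer (K : Set G) := le_centralizer_iff.mpr hKH
  constructor
  · rintro ⟨hH, hK, hfi⟩
    exact ⟨index_eq_zero_of_le_centralizer h hKH, index_eq_zero_of_le_centralizer h hHK, hfi⟩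
  · rintro ⟨hH, hK, hfi⟩
    have : (K ⊔ H).FiniteIndex := sup_comm H K ▸ hfi
    exact ⟨infinite_of_index_eq_zero_of_le_normalizer hK (hHK.trans (centralizer_le_normalizer _)),
      infinite_of_index_eq_zero_of_le_normalizer hH (hKH.trans (centralizer_le_normalizer _)), hfi⟩
end

section
/- The 5-dimensional integral Heisenberg group H₅ = ⟨x, y, u, v, z | [x,y] = [u,v] = z, all other pairs of generators commute⟩ is infinite-index presentable by products: the subgroups Γ₁ = ⟨x, y, z⟩ and Γ₂ = ⟨u, v, z⟩ commute element-wise, have infinite index in H₅, and satisfy Γ₁Γ₂ = H₅. -/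
open scoped commutatorElement

/-- Relators of the 5-dimensional integral Heisenberg group
`H₅ = ⟨x, y, u, v, z | [x,y] = [u,v] = z, all other pairs of generators commute⟩`,
with generators indexed `x = 0, y = 1, u = 2, v = 3, z = 4`. -/
def h5Rels : Set (FreeGroup (Fin 5)) :=
  let x : FreeGroup (Fin 5) := FreeGroup.of 0
  let y : FreeGroup (Fin 5) := FreeGroup.of 1
  let u : FreeGroup (Fin 5) := FreeGroup.of 2
  let v : FreeGroup (Fin 5) := FreeGroup.of 3
  let z : FreeGroup (Fin 5) := FreeGroup.of 4
  { ⁅x, y⁆ * z⁻¹, ⁅u, v⁆ * z⁻¹,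
    ⁅x, u⁆, ⁅x, v⁆, ⁅y, u⁆, ⁅y, v⁆,
    ⁅x, z⁆, ⁅y, z⁆, ⁅u, z⁆, ⁅v, z⁆ }

/-- The 5-dimensional integral Heisenberg group. -/
abbrev H5 := PresentedGroup h5Rels

/-- The images of the generators in `H₅`. -/
def h5gen (i : Fin 5) : H5 := PresentedGroup.of i

/-- `Γ₁ = ⟨x, y, z⟩`. -/
def H5Γ₁ : Subgroup H5 := Subgroup.closure {h5gen 0, h5gen 1, h5gen 4}

/-- `Γ₂ = ⟨u, v, z⟩`. -/
def H5Γ₂ : Subgroup H5 := Subgroup.closure {h5gen 2, h5gen 3, h5gen 4}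

namespace Subgroup

variable {G : Type*} [Group G]

theorem commute_of_mem_closure {s t : Set G} (hst : ∀ a ∈ s, ∀ b ∈ t, Commute a b) {a b : G}
    (ha : a ∈ closure s) (hb : b ∈ closure t) : Commute a b := by
  have hle : closure s ≤ centralizer (closure t : Set G) := by
    rw [closure_le, centralizer_closure]
    exact fun a ha b hb => (hst a ha b hb).symm
  exact (hle ha b hb).symm

theorem index_eq_zero_of_le_ker {G' : Type*} [Group G'] [Infinite G'] {f : G →* G'}
    (hf : Function.Surjective f) {H : Subgroup G} (hH : H ≤ f.ker) : H.index = 0 := by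
  have hker : f.ker.index = 0 := by
    rw [← MonoidHom.comap_bot, index_comap_of_surjective _ hf, index_bot,
      Nat.card_eq_zero_of_infinite]
  exact Nat.eq_zero_of_zero_dvd (hker ▸ index_dvd_of_le hH)

end Subgroup

theorem PresentedGroup.commute_of_commutatorElement_mem {α : Type*} {rels : Set (FreeGroup α)}
    {i j : α} (h : ⁅FreeGroup.of i, FreeGroup.of j⁆ ∈ rels) :
    Commute (PresentedGroup.of (rels := rels) i) (PresentedGroup.of j) :=
  commutatorElement_eq_one_iff_commute.mp (PresentedGroup.one_of_mem h)

theorem IIPP.of_sup_eq_top {G : Type*} [Group G] {H K : Subgroup G}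
    (hHK : ∀ a ∈ H, ∀ b ∈ K, a * b = b * a) (hH : H.index = 0) (hK : K.index = 0)
    (hsup : H ⊔ K = ⊤) : IIPP G :=
  ⟨H, K, hHK, hH, hK, by rw [hsup]; infer_instance⟩

theorem h5gen_commute {i j : Fin 5}
    (h : ⁅FreeGroup.of i, FreeGroup.of j⁆ ∈ h5Rels ∨ ⁅FreeGroup.of j, FreeGroup.of i⁆ ∈ h5Rels) :
    Commute (h5gen i) (h5gen j) :=
  h.elim PresentedGroup.commute_of_commutatorElement_mem
    fun h => (PresentedGroup.commute_of_commutatorElement_mem h).symm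

theorem H5Γ₁_commute_H5Γ₂ : ∀ a ∈ H5Γ₁, ∀ b ∈ H5Γ₂, a * b = b * a := by
  refine fun a ha b hb => Subgroup.commute_of_mem_closure ?_ ha hb
  rintro _ (rfl | rfl | rfl) _ (rfl | rfl | rfl)
  all_goals first
    | exact Commute.refl _
    | exact h5gen_commute (by simp [h5Rels])

/-- The exponent sum of the generator `i ≠ z`: well defined because every relator is a
commutator, up to a factor `z⁻¹` that it ignores. -/
noncomputable def h5ExponentSum (i : Fin 5) (hi : i ≠ 4) : H5 →* Multiplicative ℤ :=
  PresentedGroup.toGroup (f := Pi.mulSingle (M := fun _ => Multiplicative ℤ) i (.ofAdd 1)) <| by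
    intro r hr
    simp only [h5Rels, Set.mem_insert_iff, Set.mem_singleton_iff] at hr
    rcases hr with rfl | rfl | rfl | rfl | rfl | rfl | rfl | rfl | rfl | rfl <;>
      simp [map_commutatorElement, commutatorElement_eq_one_iff_commute, Commute.all,
        Pi.mulSingle_eq_of_ne' hi]

theorem h5ExponentSum_h5gen (i : Fin 5) (hi : i ≠ 4) (j : Fin 5) :
    h5ExponentSum i hi (h5gen j) =
      Pi.mulSingle (M := fun _ => Multiplicative ℤ) i (.ofAdd 1) j :=
  PresentedGroup.toGroup.of _

theorem h5ExponentSum_surjective (i : Fin 5) (hi : i ≠ 4) :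
    Function.Surjective (h5ExponentSum i hi) := fun n =>
  ⟨h5gen i ^ n.toAdd, by simp [h5ExponentSum_h5gen, ← ofAdd_zsmul]⟩

theorem index_closure_eq_zero_of_h5ExponentSum {i : Fin 5} (hi : i ≠ 4) {s : Set H5}
    (hs : ∀ g ∈ s, h5ExponentSum i hi g = 1) : (Subgroup.closure s).index = 0 :=
  Subgroup.index_eq_zero_of_le_ker (h5ExponentSum_surjective i hi)
    (Subgroup.closure_le _ |>.mpr hs)

theorem H5Γ₁_index : H5Γ₁.index = 0 :=
  index_closure_eq_zero_of_h5ExponentSum (i := 2) (by decide) <| by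
    rintro _ (rfl | rfl | rfl) <;> simp [h5ExponentSum_h5gen]

theorem H5Γ₂_index : H5Γ₂.index = 0 :=
  index_closure_eq_zero_of_h5ExponentSum (i := 0) (by decide) <| by
    rintro _ (rfl | rfl | rfl) <;> simp [h5ExponentSum_h5gen]

theorem H5Γ₁_sup_H5Γ₂ : H5Γ₁ ⊔ H5Γ₂ = ⊤ := by
  rw [eq_top_iff, ← PresentedGroup.closure_range_of, H5Γ₁, H5Γ₂, ← Subgroup.closure_union]
  refine Subgroup.closure_mono ?_
  rintro _ ⟨i, rfl⟩
  fin_cases i <;> simp [h5gen]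

/-- `H₅` is IIPP: the subgroups `Γ₁ = ⟨x,y,z⟩` and `Γ₂ = ⟨u,v,z⟩`
commute element-wise, have infinite index, and `Γ₁Γ₂ = H₅`. -/
theorem stmt14 :
    (∀ a ∈ H5Γ₁, ∀ b ∈ H5Γ₂, a * b = b * a) ∧
    H5Γ₁.index = 0 ∧ H5Γ₂.index = 0 ∧ H5Γ₁ ⊔ H5Γ₂ = ⊤ ∧ IIPP H5 :=
  ⟨H5Γ₁_commute_H5Γ₂, H5Γ₁_index, H5Γ₂_index, H5Γ₁_sup_H5Γ₂,
    .of_sup_eq_top H5Γ₁_commute_H5Γ₂ H5Γ₁_index H5Γ₂_index H5Γ₁_sup_H5Γ₂⟩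
end

section
/- The 5-dimensional integral Heisenberg group H₅ is irreducible: no finite index subgroup of H₅ is isomorphic to a direct product of two nontrivial groups. -/
open scoped commutatorElement

/-!
In the coordinates of the normal form `x ^ a * y ^ b * (u ^ c * v ^ d) * z ^ e`, the commutator of
two elements of `H₅` is `z` raised to a nondegenerate alternating form in their `(a, b, c, d)`.
So `H₅` is torsion-free and nilpotent, and an element commuting with some `h ^ n`, `n ≠ 0`,
commutes with `h`; the centralizer of a finite index subgroup `H` therefore lies in the centre
`⟨z⟩`, and `Z(H)` is cyclic. If `H ≃ A × B`, then `A` and `B` are nilpotent, hence have nontrivial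
centres, and `Z(H) ≃ Z(A) × Z(B)` would be a cyclic product of two nontrivial torsion-free groups.
-/

section Commutator

variable {G : Type*} [Group G] {x y : G}

theorem commutatorElement_zpow_right (h : Commute ⁅x, y⁆ y) (n : ℤ) :
    ⁅x, y ^ n⁆ = ⁅x, y⁆ ^ n := by
  have hconj : x * y * x⁻¹ = ⁅x, y⁆ * y := by rw [commutatorElement_def]; group
  rw [commutatorElement_def, ← conj_zpow, hconj, h.mul_zpow, mul_inv_cancel_right]

theorem commutatorElement_zpow_zpow (hx : Commute ⁅x, y⁆ x) (hy : Commute ⁅x, y⁆ y) (m n : ℤ) :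
    ⁅x ^ m, y ^ n⁆ = ⁅x, y⁆ ^ (m * n) := by
  have hyx : ⁅y ^ n, x⁆ = (⁅x, y⁆ ^ n)⁻¹ := by
    rw [← commutatorElement_zpow_right hy, commutatorElement_inv]
  have hyx_comm : Commute ⁅y ^ n, x⁆ x := hyx ▸ (hx.zpow_left n).inv_left
  rw [← commutatorElement_inv, commutatorElement_zpow_right hyx_comm, hyx, inv_zpow, inv_inv,
    ← zpow_mul, mul_comm]

theorem zpow_mul_zpow_mul_zpow_mul_zpow
    (hx : Commute ⁅x, y⁆ x) (hy : Commute ⁅x, y⁆ y) (a b a' b' : ℤ) :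
    x ^ a * y ^ b * (x ^ a' * y ^ b') = x ^ (a + a') * y ^ (b + b') * ⁅x, y⁆ ^ (-(a' * b)) := by
  have hswap : y ^ b * x ^ a' = ⁅x, y⁆ ^ (-(a' * b)) * (x ^ a' * y ^ b) := by
    rw [zpow_neg, ← commutatorElement_zpow_zpow hx hy a' b, commutatorElement_def]
    group
  have hcx : Commute (⁅x, y⁆ ^ (-(a' * b))) (x ^ a' * y ^ b) :=
    (hx.zpow_zpow _ _).mul_right (hy.zpow_zpow _ _)
  have hcy : Commute (⁅x, y⁆ ^ (-(a' * b))) (y ^ b') := hy.zpow_zpow _ _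
  calc x ^ a * y ^ b * (x ^ a' * y ^ b')
      = x ^ a * (y ^ b * x ^ a') * y ^ b' := by group
    _ = x ^ a * x ^ a' * y ^ b * (⁅x, y⁆ ^ (-(a' * b)) * y ^ b') := by rw [hswap, hcx.eq]; group
    _ = x ^ (a + a') * y ^ (b + b') * ⁅x, y⁆ ^ (-(a' * b)) := by
        rw [hcy.eq, zpow_add, zpow_add]; group

end Commutator

theorem not_isCyclic_prod {G K : Type*} [Group G] [Group K] [Nontrivial G] [Nontrivial K]
    [IsMulTorsionFree K] : ¬ IsCyclic (G × K) := by
  rintro ⟨c, hc⟩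
  obtain ⟨g, hg⟩ := exists_ne (1 : G)
  obtain ⟨k, hk⟩ := exists_ne (1 : K)
  obtain ⟨m, hm⟩ := hc (g, 1)
  obtain ⟨n, hn⟩ := hc (1, k)
  have hm0 : m ≠ 0 := by rintro rfl; exact hg (by simpa using (congrArg Prod.fst hm).symm)
  have hc2 : c.2 = 1 :=
    (IsMulTorsionFree.zpow_eq_one_iff_left hm0).mp (by simpa using congrArg Prod.snd hm)
  exact hk (by simpa [hc2] using (congrArg Prod.snd hn).symm)

theorem Subgroup.centralizer_le_center_of_finiteIndex {G : Type*} [Group G]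
    (hG : ∀ (g h : G) (n : ℕ), n ≠ 0 → Commute g (h ^ n) → Commute g h)
    (H : Subgroup G) [H.FiniteIndex] : centralizer (H : Set G) ≤ center G := by
  intro g hg
  rw [mem_center_iff]
  intro h
  obtain ⟨n, hn, -, hmem⟩ :=
    exists_pow_mem_of_index_ne_zero (FiniteIndex.index_ne_zero (H := H)) h
  exact (hG g h n hn.ne' (mem_centralizer_iff.mp hg _ hmem).symm).eq.symm

theorem isEmpty_mulEquiv_prod_of_isCyclic_center {G A B : Type*} [Group G] [Group A] [Group B]
    [Group.IsNilpotent G] [IsMulTorsionFree G] [IsCyclic (Subgroup.center G)]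
    [Nontrivial A] [Nontrivial B] : IsEmpty (G ≃* A × B) := by
  refine ⟨fun e => ?_⟩
  have : Group.IsNilpotent A := Group.nilpotent_of_surjective
    ((MonoidHom.fst A B).comp e.toMonoidHom) (Prod.fst_surjective.comp e.surjective)
  have : Group.IsNilpotent B := Group.nilpotent_of_surjective
    ((MonoidHom.snd A B).comp e.toMonoidHom) (Prod.snd_surjective.comp e.surjective)
  have : IsMulTorsionFree B := Function.Injective.isMulTorsionFree
    (e.symm.toMonoidHom.comp (MonoidHom.inr A B))
    (e.symm.injective.comp (Prod.mk_right_injective 1))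
  have : Nontrivial (Subgroup.center A) :=
    Subgroup.nontrivial_iff_ne_bot _ |>.mpr (Group.IsNilpotent.center_ne_bot _)
  have : Nontrivial (Subgroup.center B) :=
    Subgroup.nontrivial_iff_ne_bot _ |>.mpr (Group.IsNilpotent.center_ne_bot _)
  let f : Subgroup.center G ≃* Subgroup.center A × Subgroup.center B :=
    (Subgroup.centerCongr e).trans
      ((MulEquiv.subgroupCongr Subgroup.center_prod).trans (Subgroup.prodEquiv _ _))
  exact not_isCyclic_prod (isCyclic_of_surjective f.toMonoidHom f.surjective)

/-- `⟨a, b, c, d, e⟩` models the normal form `x ^ a * y ^ b * (u ^ c * v ^ d) * z ^ e` of `H₅`;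
the product is read off from `y ^ b * x ^ a' = x ^ a' * y ^ b * z ^ (-(a' * b))` and its
analogue for `u, v`. -/
@[ext] structure H5Model where
  a : ℤ
  b : ℤ
  c : ℤ
  d : ℤ
  e : ℤ

namespace H5Model

instance : Mul H5Model :=
  ⟨fun g h => ⟨g.a + h.a, g.b + h.b, g.c + h.c, g.d + h.d, g.e + h.e - h.a * g.b - h.c * g.d⟩⟩
instance : One H5Model := ⟨⟨0, 0, 0, 0, 0⟩⟩
instance : Inv H5Model := ⟨fun g => ⟨-g.a, -g.b, -g.c, -g.d, -g.e - g.a * g.b - g.c * g.d⟩⟩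

@[simp] lemma mul_a (g h : H5Model) : (g * h).a = g.a + h.a := rfl
@[simp] lemma mul_b (g h : H5Model) : (g * h).b = g.b + h.b := rfl
@[simp] lemma mul_c (g h : H5Model) : (g * h).c = g.c + h.c := rfl
@[simp] lemma mul_d (g h : H5Model) : (g * h).d = g.d + h.d := rfl
@[simp] lemma mul_e (g h : H5Model) : (g * h).e = g.e + h.e - h.a * g.b - h.c * g.d := rfl
@[simp] lemma one_a : (1 : H5Model).a = 0 := rfl
@[simp] lemma one_b : (1 : H5Model).b = 0 := rfl
@[simp] lemma one_c : (1 : H5Model).c = 0 := rfl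
@[simp] lemma one_d : (1 : H5Model).d = 0 := rfl
@[simp] lemma one_e : (1 : H5Model).e = 0 := rfl
@[simp] lemma inv_a (g : H5Model) : g⁻¹.a = -g.a := rfl
@[simp] lemma inv_b (g : H5Model) : g⁻¹.b = -g.b := rfl
@[simp] lemma inv_c (g : H5Model) : g⁻¹.c = -g.c := rfl
@[simp] lemma inv_d (g : H5Model) : g⁻¹.d = -g.d := rfl
@[simp] lemma inv_e (g : H5Model) : g⁻¹.e = -g.e - g.a * g.b - g.c * g.d := rfl

instance : Group H5Model where
  mul_assoc _ _ _ := by ext <;> simp <;> ring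
  one_mul _ := by ext <;> simp
  mul_one _ := by ext <;> simp
  inv_mul_cancel _ := by ext <;> simp; ring

theorem commute_iff {g h : H5Model} :
    Commute g h ↔ g.a * h.b - g.b * h.a + g.c * h.d - g.d * h.c = 0 := by
  constructor
  · intro hgh
    have he := congrArg e hgh.eq
    simp only [mul_e] at he
    linarith
  · intro hform
    ext <;> simp only [mul_a, mul_b, mul_c, mul_d, mul_e] <;> linarith

@[simp] lemma pow_a (g : H5Model) (n : ℕ) : (g ^ n).a = n * g.a := by
  induction n <;> simp [pow_succ, add_mul, *]

@[simp] lemma pow_b (g : H5Model) (n : ℕ) : (g ^ n).b = n * g.b := by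
  induction n <;> simp [pow_succ, add_mul, *]

@[simp] lemma pow_c (g : H5Model) (n : ℕ) : (g ^ n).c = n * g.c := by
  induction n <;> simp [pow_succ, add_mul, *]

@[simp] lemma pow_d (g : H5Model) (n : ℕ) : (g ^ n).d = n * g.d := by
  induction n <;> simp [pow_succ, add_mul, *]

lemma two_mul_pow_e (g : H5Model) (n : ℕ) :
    2 * (g ^ n).e = 2 * n * g.e - n * (n - 1) * (g.a * g.b + g.c * g.d) := by
  induction n with
  | zero => simp
  | succ n ih => rw [pow_succ, mul_e, mul_sub, mul_sub, mul_add, ih, pow_b, pow_d]; push_cast; ring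

instance : IsMulTorsionFree H5Model where
  pow_left_injective n hn g h hgh := by
    simp only at hgh
    have hn' : (n : ℤ) ≠ 0 := by exact_mod_cast hn
    have ha : g.a = h.a := mul_left_cancel₀ hn' (by simpa using congrArg a hgh)
    have hb : g.b = h.b := mul_left_cancel₀ hn' (by simpa using congrArg b hgh)
    have hc : g.c = h.c := mul_left_cancel₀ hn' (by simpa using congrArg c hgh)
    have hd : g.d = h.d := mul_left_cancel₀ hn' (by simpa using congrArg d hgh)
    have he := congrArg (fun k => 2 * k.e) hgh
    simp only [two_mul_pow_e, ha, hb, hc, hd] at he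
    ext
    exacts [ha, hb, hc, hd, mul_left_cancel₀ (mul_ne_zero two_ne_zero hn') (by linarith)]

theorem commute_of_commute_pow {g h : H5Model} {n : ℕ} (hn : n ≠ 0) (hgh : Commute g (h ^ n)) :
    Commute g h := by
  rw [commute_iff] at hgh ⊢
  simp only [pow_a, pow_b, pow_c, pow_d] at hgh
  have hn' : (n : ℤ) ≠ 0 := by exact_mod_cast hn
  refine (mul_eq_zero.mp ?_).resolve_left hn'
  linear_combination hgh

def toLattice : H5Model →* Multiplicative (ℤ × ℤ × ℤ × ℤ) where
  toFun g := .ofAdd (g.a, g.b, g.c, g.d)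
  map_one' := rfl
  map_mul' _ _ := rfl

instance : Group.IsNilpotent H5Model := by
  refine Subgroup.isNilpotent_of_ker_le_center toLattice fun g hg => ?_
  simp only [MonoidHom.mem_ker, toLattice, MonoidHom.coe_mk, OneHom.coe_mk, ofAdd_eq_one,
    Prod.mk_eq_zero] at hg
  obtain ⟨ha, hb, hc, hd⟩ := hg
  exact Subgroup.mem_center_iff.mpr fun h => (commute_iff.mpr (by simp [ha, hb, hc, hd])).eq

end H5Model

namespace H5

def x : H5 := PresentedGroup.of 0
def y : H5 := PresentedGroup.of 1
def u : H5 := PresentedGroup.of 2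
def v : H5 := PresentedGroup.of 3
def z : H5 := PresentedGroup.of 4

lemma commute_of_of {i j : Fin 5} (h : ⁅FreeGroup.of i, FreeGroup.of j⁆ ∈ h5Rels) :
    Commute (PresentedGroup.of i : H5) (PresentedGroup.of j : H5) := by
  have := PresentedGroup.one_of_mem h
  rw [map_commutatorElement] at this
  exact commutatorElement_eq_one_iff_commute.mp this

lemma commutatorElement_of_of_eq_z {i j : Fin 5}
    (h : ⁅FreeGroup.of i, FreeGroup.of j⁆ * (FreeGroup.of 4)⁻¹ ∈ h5Rels) :
    ⁅(PresentedGroup.of i : H5), (PresentedGroup.of j : H5)⁆ = z := by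
  have := PresentedGroup.one_of_mem h
  rw [map_mul, map_inv, map_commutatorElement, mul_inv_eq_one] at this
  exact this

lemma commutatorElement_x_y : ⁅x, y⁆ = z := commutatorElement_of_of_eq_z (by simp [h5Rels])
lemma commutatorElement_u_v : ⁅u, v⁆ = z := commutatorElement_of_of_eq_z (by simp [h5Rels])

lemma commute_x_u : Commute x u := commute_of_of (by simp [h5Rels])
lemma commute_x_v : Commute x v := commute_of_of (by simp [h5Rels])
lemma commute_y_u : Commute y u := commute_of_of (by simp [h5Rels])
lemma commute_y_v : Commute y v := commute_of_of (by simp [h5Rels])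

lemma z_mem_center : z ∈ Subgroup.center H5 := by
  suffices ∀ g : H5, g ∈ Subgroup.centralizer {z} from
    Subgroup.mem_center_iff.mpr fun g => Subgroup.mem_centralizer_singleton_iff.mp (this g)
  refine PresentedGroup.generated_by _ _ fun i => Subgroup.mem_centralizer_singleton_iff.mpr ?_
  fin_cases i
  all_goals first | rfl | exact (commute_of_of (by simp [h5Rels])).eq

lemma commute_z (g : H5) : Commute z g := (Subgroup.mem_center_iff.mp z_mem_center g).symm

def toModel : H5 →* H5Model :=
  PresentedGroup.toGroup (f := ![⟨1, 0, 0, 0, 0⟩, ⟨0, 1, 0, 0, 0⟩, ⟨0, 0, 1, 0, 0⟩,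
      ⟨0, 0, 0, 1, 0⟩, ⟨0, 0, 0, 0, 1⟩]) <| by
    intro r hr
    simp only [h5Rels, Set.mem_insert_iff, Set.mem_singleton_iff] at hr
    rcases hr with rfl | rfl | rfl | rfl | rfl | rfl | rfl | rfl | rfl | rfl <;>
      ext <;> simp [commutatorElement_def]

@[simp] lemma toModel_x : toModel x = ⟨1, 0, 0, 0, 0⟩ := PresentedGroup.toGroup.of _
@[simp] lemma toModel_y : toModel y = ⟨0, 1, 0, 0, 0⟩ := PresentedGroup.toGroup.of _
@[simp] lemma toModel_u : toModel u = ⟨0, 0, 1, 0, 0⟩ := PresentedGroup.toGroup.of _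
@[simp] lemma toModel_v : toModel v = ⟨0, 0, 0, 1, 0⟩ := PresentedGroup.toGroup.of _

def ofModel : H5Model →* H5 where
  toFun g := x ^ g.a * y ^ g.b * (u ^ g.c * v ^ g.d) * z ^ g.e
  map_one' := by simp
  map_mul' g h := by
    have hxy := zpow_mul_zpow_mul_zpow_mul_zpow (x := x) (y := y)
      (commutatorElement_x_y ▸ commute_z x) (commutatorElement_x_y ▸ commute_z y)
    have huv := zpow_mul_zpow_mul_zpow_mul_zpow (x := u) (y := v)
      (commutatorElement_u_v ▸ commute_z u) (commutatorElement_u_v ▸ commute_z v)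
    have hQP : Commute (u ^ g.c * v ^ g.d) (x ^ h.a * y ^ h.b) :=
      ((commute_x_u.zpow_zpow _ _).symm.mul_right (commute_y_u.zpow_zpow _ _).symm).mul_left
        ((commute_x_v.zpow_zpow _ _).symm.mul_right (commute_y_v.zpow_zpow _ _).symm)
    simp only [H5Model.mul_a, H5Model.mul_b, H5Model.mul_c, H5Model.mul_d, H5Model.mul_e]
    rw [((commute_z _).zpow_left _).mul_mul_mul_comm, hQP.mul_mul_mul_comm, hxy, huv,
      commutatorElement_x_y, commutatorElement_u_v, ((commute_z _).zpow_left _).mul_mul_mul_comm,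
      mul_assoc (x ^ _ * _ * _), ← zpow_add, ← zpow_add, ← zpow_add]
    congr 2
    ring

@[simp] lemma ofModel_apply (g : H5Model) :
    ofModel g = x ^ g.a * y ^ g.b * (u ^ g.c * v ^ g.d) * z ^ g.e := rfl

lemma ofModel_toModel (g : H5) : ofModel (toModel g) = g := by
  suffices ofModel.comp toModel = MonoidHom.id H5 from DFunLike.congr_fun this g
  refine PresentedGroup.ext fun i => ?_
  fin_cases i <;> simp [toModel] <;> rfl

lemma toModel_injective : Function.Injective toModel :=
  Function.LeftInverse.injective ofModel_toModel

instance : IsMulTorsionFree H5 := toModel_injective.isMulTorsionFree toModel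

instance : Group.IsNilpotent H5 :=
  Group.nilpotent_of_mulEquiv (MonoidHom.ofInjective toModel_injective).symm

lemma commute_of_commute_pow {g h : H5} {n : ℕ} (hn : n ≠ 0) (hgh : Commute g (h ^ n)) :
    Commute g h :=
  Commute.of_map toModel_injective <|
    H5Model.commute_of_commute_pow hn (by simpa only [map_pow] using hgh.map toModel)

lemma center_le_zpowers_z : Subgroup.center H5 ≤ Subgroup.zpowers z := by
  intro g hg
  have hcomm (h : H5) : Commute (toModel g) (toModel h) :=
    Commute.map (Subgroup.mem_center_iff.mp hg h).symm toModel
  have ha := H5Model.commute_iff.mp (hcomm y)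
  have hb := H5Model.commute_iff.mp (hcomm x)
  have hc := H5Model.commute_iff.mp (hcomm v)
  have hd := H5Model.commute_iff.mp (hcomm u)
  simp only [toModel_x, toModel_y, toModel_u, toModel_v, mul_one, mul_zero, sub_zero, add_zero,
    zero_sub, neg_eq_zero, sub_self, zero_add] at ha hb hc hd
  refine Subgroup.mem_zpowers_iff.mpr ⟨(toModel g).e, ?_⟩
  conv_rhs => rw [← ofModel_toModel g]
  simp [ha, hb, hc, hd]

lemma centralizer_le_zpowers_z (H : Subgroup H5) [H.FiniteIndex] :
    Subgroup.centralizer (H : Set H5) ≤ Subgroup.zpowers z :=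
  (Subgroup.centralizer_le_center_of_finiteIndex (fun _ _ _ => commute_of_commute_pow) H).trans
    center_le_zpowers_z

instance isCyclic_center (H : Subgroup H5) [H.FiniteIndex] : IsCyclic (Subgroup.center H) := by
  let f : Subgroup.center H →* H5 := H.subtype.comp (Subgroup.center H).subtype
  have hf (c : Subgroup.center H) : f c ∈ Subgroup.zpowers z :=
    centralizer_le_zpowers_z H <| Subgroup.mem_centralizer_iff.mpr fun h hh =>
      congrArg Subtype.val (Subgroup.mem_center_iff.mp c.2 ⟨h, hh⟩)
  exact isCyclic_of_injective (f.codRestrict _ hf) ((MonoidHom.injective_codRestrict _ _ _).mpr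
    (H.subtype_injective.comp (Subgroup.center H).subtype_injective))

end H5

/-- `H₅` is irreducible: no finite index subgroup of `H₅` is isomorphic
to a direct product of two nontrivial groups. -/
theorem stmt15 :
    ¬ ∃ H : Subgroup H5, H.FiniteIndex ∧
      ∃ A B : Subgroup ↥H, Nontrivial ↥A ∧ Nontrivial ↥B ∧
        Nonempty (↥H ≃* ↥A × ↥B) := by
  rintro ⟨H, _, A, B, _, _, ⟨e⟩⟩
  exact isEmpty_mulEquiv_prod_of_isCyclic_center.false e
end

section
/- The fundamental group of a nontrivial circle bundle over the 2-torus, G_n = ⟨x, y, z | [x,y] = zⁿ, xz = zx, yz = zy⟩ with n ≥ 1, is not IIPP: there do not exist element-wise commuting subgroups Γ₁, Γ₂ ⊆ G_n, both of infinite index in G_n, such that Γ₁Γ₂ has finite index in G_n. -/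
open scoped commutatorElement

/-- The relators of `G_n = ⟨x, y, z | [x,y] = zⁿ, xz = zx, yz = zy⟩`. -/
def gnRels (n : ℕ) : Set (FreeGroup (Fin 3)) :=
  let x : FreeGroup (Fin 3) := FreeGroup.of 0
  let y : FreeGroup (Fin 3) := FreeGroup.of 1
  let z : FreeGroup (Fin 3) := FreeGroup.of 2
  { ⁅x, y⁆ * (z ^ n)⁻¹, ⁅x, z⁆, ⁅y, z⁆ }

/-- The fundamental group `G_n` of a circle bundle over the 2-torus with Euler
number `n`. -/
abbrev Gn (n : ℕ) := PresentedGroup (gnRels n)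

/-!
Via the normal form `x^a y^b z^c`, `G_n` is `ℤ³` with the product
`(a, b, c) (a', b', c') = (a + a', b + b', c + c' - n a' b)`, read off from
`y^b x^a' = x^a' y^b z^(-n a' b)`. There `⁅g, h⁆ = z^(n det(g, h))`, with `det` the determinant
of the `(a, b)`-parts, so `g` and `h` commute iff `det(g, h) = 0`.

If `H` contains `g, h` with `det(g, h) ≠ 0`, everything commuting with both is a power of `z`,
so `K ≤ ⟨z⟩`; since `H ∋ ⁅g, h⁆ = z^(n det(g, h)) ≠ 1`, `H` has finite index in `H ⊔ K`, hence in `G_n`.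
Otherwise `det` vanishes on `H × H`, on `K × K`, and (by commutation) on `H × K`, hence on all of
`H ⊔ K`; but a finite-index subgroup contains powers `x^p`, `y^q` with `det = p q ≠ 0`.
-/

namespace Subgroup
variable {G : Type*} [Group G] {H K : Subgroup G}

theorem relIndex_sup_of_le_normalizer (hK : K ≤ normalizer (H : Set G)) :
    H.relIndex (H ⊔ K) = H.relIndex K := by
  rw [sup_comm]
  have := normal_subgroupOf_of_le_normalizer hK
  have := normal_subgroupOf_sup_of_le_normalizer hK
  exact (Nat.card_congr (QuotientGroup.quotientInfEquivProdNormalizerQuotient K H hK).toEquiv).symm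

theorem relIndex_zpowers_ne_zero {g : G} {k : ℤ} (hk : k ≠ 0) (hg : g ^ k ∈ H) :
    H.relIndex (zpowers g) ≠ 0 := by
  rw [← range_zpowersHom, ← index_comap]
  have hle : AddSubgroup.toSubgroup (AddSubgroup.zmultiples k) ≤ H.comap (zpowersHom G g) := by
    rw [← AddSubgroup.toSubgroup.le_symm_apply, AddSubgroup.zmultiples_le]
    exact hg
  refine ne_zero_of_dvd_ne_zero ?_ (index_dvd_of_le hle)
  simpa [AddSubgroup.index_toSubgroup, Int.index_zmultiples] using hk

end Subgroup

open Subgroup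

lemma IIPP.of_mulEquiv {G G' : Type*} [Group G] [Group G'] (e : G ≃* G') (h : IIPP G) :
    IIPP G' := by
  obtain ⟨H, K, hcomm, hH, hK, hHK⟩ := h
  refine ⟨H.map e, K.map e, ?_, by rwa [index_map_equiv], by rwa [index_map_equiv], ?_⟩
  · rintro _ ⟨a, ha, rfl⟩ _ ⟨b, hb, rfl⟩
    simp only [MonoidHom.coe_coe, ← map_mul, hcomm a ha b hb]
  · rw [← Subgroup.map_sup]
    exact ⟨by rw [index_map_equiv]; exact hHK.index_ne_zero⟩

@[ext]
structure Heis (n : ℕ) where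
  a : ℤ
  b : ℤ
  c : ℤ

namespace Heis
variable {n : ℕ}

instance : Mul (Heis n) := ⟨fun g h => ⟨g.a + h.a, g.b + h.b, g.c + h.c - n * h.a * g.b⟩⟩
instance : One (Heis n) := ⟨⟨0, 0, 0⟩⟩
instance : Inv (Heis n) := ⟨fun g => ⟨-g.a, -g.b, -g.c - n * g.a * g.b⟩⟩

@[simp] lemma mul_a (g h : Heis n) : (g * h).a = g.a + h.a := rfl
@[simp] lemma mul_b (g h : Heis n) : (g * h).b = g.b + h.b := rfl
@[simp] lemma mul_c (g h : Heis n) : (g * h).c = g.c + h.c - n * h.a * g.b := rfl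
@[simp] lemma one_a : (1 : Heis n).a = 0 := rfl
@[simp] lemma one_b : (1 : Heis n).b = 0 := rfl
@[simp] lemma one_c : (1 : Heis n).c = 0 := rfl
@[simp] lemma inv_a (g : Heis n) : g⁻¹.a = -g.a := rfl
@[simp] lemma inv_b (g : Heis n) : g⁻¹.b = -g.b := rfl
@[simp] lemma inv_c (g : Heis n) : g⁻¹.c = -g.c - n * g.a * g.b := rfl

instance : Group (Heis n) where
  mul_assoc g h k := by ext <;> simp <;> ring
  one_mul g := by ext <;> simp
  mul_one g := by ext <;> simp
  inv_mul_cancel g := by ext <;> simp; ring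

lemma zpow_eq_of_a_mul_b_eq_zero {g : Heis n} (hg : g.a * g.b = 0) (m : ℤ) :
    g ^ m = ⟨m * g.a, m * g.b, m * g.c⟩ := by
  induction m using Int.induction_on with
  | zero => ext <;> simp
  | succ k ih =>
    rw [zpow_add_one, ih]
    ext
    · simp only [mul_a]; ring
    · simp only [mul_b]; ring
    · simp only [mul_c]; linear_combination (-(n * k) : ℤ) * hg
  | pred k ih =>
    rw [zpow_sub_one, ih]
    ext
    · simp only [mul_a, inv_a]; ring
    · simp only [mul_b, inv_b]; ring
    · simp only [mul_c, inv_a, inv_c]; linear_combination (-(n * (k + 1)) : ℤ) * hg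

def z : Heis n := ⟨0, 0, 1⟩

lemma z_zpow (m : ℤ) : (z : Heis n) ^ m = ⟨0, 0, m⟩ := by
  simpa [z] using zpow_eq_of_a_mul_b_eq_zero (g := (z : Heis n)) (by simp [z]) m

lemma mem_zpowers_z {g : Heis n} (ha : g.a = 0) (hb : g.b = 0) : g ∈ zpowers z :=
  ⟨g.c, (z_zpow g.c).trans (by ext <;> simp [ha, hb])⟩

def det (g h : Heis n) : ℤ := g.a * h.b - h.a * g.b

lemma det_anticomm (g h : Heis n) : det h g = -det g h := by simp only [det]; ring

lemma commutatorElement_eq (g h : Heis n) : ⁅g, h⁆ = z ^ (n * det g h) := by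
  rw [z_zpow, commutatorElement_def]
  ext <;> simp [det]; ring

lemma det_eq_zero_of_commute (hn : n ≠ 0) {g h : Heis n} (hgh : Commute g h) : det g h = 0 := by
  have hc := congrArg c ((commutatorElement_eq g h).symm.trans
    (commutatorElement_eq_one_iff_commute.2 hgh))
  simpa [z_zpow, hn] using hc

lemma mem_zpowers_z_of_det_eq_zero {g h k : Heis n} (hgh : det g h ≠ 0) (hgk : det g k = 0)
    (hhk : det h k = 0) : k ∈ zpowers z := by
  simp only [det] at hgh hgk hhk
  refine mem_zpowers_z (mul_left_cancel₀ hgh ?_) (mul_left_cancel₀ hgh ?_)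
  · linear_combination h.a * hgk - g.a * hhk
  · linear_combination h.b * hgk - g.b * hhk

def orthogonal (S : Set (Heis n)) : Subgroup (Heis n) where
  carrier := {g | ∀ h ∈ S, det g h = 0}
  one_mem' h _ := by simp [det]
  mul_mem' {g g'} hg hg' h hh := by
    have := hg h hh; have := hg' h hh
    simp only [det, mul_a, mul_b] at *; linarith
  inv_mem' {g} hg h hh := by
    have := hg h hh
    simp only [det, inv_a, inv_b] at *; linarith

def IsIsotropic (S : Set (Heis n)) : Prop := S ⊆ orthogonal S

lemma IsIsotropic.closure {S : Set (Heis n)} (hS : IsIsotropic S) :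
    IsIsotropic (Subgroup.closure S : Set (Heis n)) := by
  have hle : Subgroup.closure S ≤ orthogonal S := (closure_le _).2 hS
  refine (closure_le _).2 fun s hs g hg => ?_
  rw [det_anticomm, hle hg s hs, neg_zero]

lemma not_isIsotropic_of_index_ne_zero {H : Subgroup (Heis n)} (hH : H.index ≠ 0) :
    ¬ IsIsotropic (H : Set (Heis n)) := by
  intro hiso
  obtain ⟨p, hp, -, hxp⟩ := exists_pow_mem_of_index_ne_zero hH (⟨1, 0, 0⟩ : Heis n)
  obtain ⟨q, hq, -, hyq⟩ := exists_pow_mem_of_index_ne_zero hH (⟨0, 1, 0⟩ : Heis n)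
  have := hiso hxp _ hyq
  rw [← zpow_natCast, ← zpow_natCast, zpow_eq_of_a_mul_b_eq_zero (by simp),
    zpow_eq_of_a_mul_b_eq_zero (by simp)] at this
  simp [det, hp.ne', hq.ne'] at this

lemma index_ne_zero_of_not_isIsotropic (hn : n ≠ 0) {H K : Subgroup (Heis n)}
    (hH : ¬ IsIsotropic (H : Set (Heis n))) (hK : K ≤ centralizer H) (hHK : (H ⊔ K).index ≠ 0) :
    H.index ≠ 0 := by
  obtain ⟨g, hg, h, hh, hgh⟩ : ∃ g ∈ H, ∃ h ∈ H, det g h ≠ 0 := by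
    simpa [IsIsotropic, Set.subset_def, orthogonal] using hH
  have hKz : K ≤ zpowers z := fun k hk =>
    mem_zpowers_z_of_det_eq_zero hgh (det_eq_zero_of_commute hn (hK hk g hg))
      (det_eq_zero_of_commute hn (hK hk h hh))
  have hz : z ^ (n * det g h) ∈ H := by
    rw [← commutatorElement_eq, commutatorElement_def]
    exact mul_mem (mul_mem (mul_mem hg hh) (inv_mem hg)) (inv_mem hh)
  have hHK' : H.relIndex K ≠ 0 := mt (relIndex_eq_zero_of_le_right hKz)
    (relIndex_zpowers_ne_zero (mul_ne_zero (by exact_mod_cast hn) hgh) hz)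
  rw [← relIndex_mul_index (le_sup_left : H ≤ H ⊔ K),
    relIndex_sup_of_le_normalizer (hK.trans (centralizer_le_normalizer _))]
  exact mul_ne_zero hHK' hHK

theorem not_iipp (hn : n ≠ 0) : ¬ IIPP (Heis n) := by
  rintro ⟨H, K, hcomm, hH, hK, hHK⟩
  have isoH : IsIsotropic (H : Set (Heis n)) := by
    by_contra h
    exact index_ne_zero_of_not_isIsotropic hn h (fun k hk g hg => hcomm g hg k hk)
      hHK.index_ne_zero hH
  have isoK : IsIsotropic (K : Set (Heis n)) := by
    by_contra h
    exact index_ne_zero_of_not_isIsotropic hn h (fun g hg k hk => (hcomm g hg k hk).symm)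
      (sup_comm H K ▸ hHK.index_ne_zero) hK
  have iso : IsIsotropic ((H : Set (Heis n)) ∪ K) := by
    rintro g (hg | hg) h (hh | hh)
    · exact isoH hg h hh
    · exact det_eq_zero_of_commute hn (hcomm g hg h hh)
    · exact det_eq_zero_of_commute hn (hcomm h hh g hg).symm
    · exact isoK hg h hh
  have := iso.closure
  rw [Subgroup.closure_union, closure_eq, closure_eq] at this
  exact not_isIsotropic_of_index_ne_zero hHK.index_ne_zero this

end Heis

namespace Gn
variable {n : ℕ}

def x : Gn n := PresentedGroup.of 0
def y : Gn n := PresentedGroup.of 1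
def z : Gn n := PresentedGroup.of 2

lemma commutatorElement_x_y : ⁅(x : Gn n), (y : Gn n)⁆ = z ^ n := by
  have h := PresentedGroup.one_of_mem (rels := gnRels n) (Set.mem_insert _ _)
  rw [map_mul, map_commutatorElement, map_inv, map_pow] at h
  exact mul_inv_eq_one.1 h

lemma commute_z_x : Commute (z : Gn n) x := by
  have h := PresentedGroup.one_of_mem (rels := gnRels n) (.inr (.inl rfl))
  rw [map_commutatorElement] at h
  exact (commutatorElement_eq_one_iff_commute.1 h).symm

lemma commute_z_y : Commute (z : Gn n) y := by
  have h := PresentedGroup.one_of_mem (rels := gnRels n) (.inr (.inr rfl))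
  rw [map_commutatorElement] at h
  exact (commutatorElement_eq_one_iff_commute.1 h).symm

lemma z_mem_center : (z : Gn n) ∈ center (Gn n) := by
  refine mem_center_iff.2 fun g => ?_
  refine mem_centralizer_singleton_iff.1 (PresentedGroup.generated_by _ _ (fun j => ?_) g)
  rw [mem_centralizer_singleton_iff]
  fin_cases j
  exacts [commute_z_x.eq.symm, commute_z_y.eq.symm, rfl]

lemma zpow_z_mul_comm (k : ℤ) (g : Gn n) : z ^ k * g = g * z ^ k :=
  (mem_center_iff.1 (zpow_mem z_mem_center k) g).symm

lemma y_mul_x_zpow (a : ℤ) : (y : Gn n) * x ^ a = x ^ a * y * z ^ (-(n * a)) := by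
  have hconj : y * x * y⁻¹ = (z : Gn n) ^ (-(n : ℤ)) * x := by
    have h := commutatorElement_x_y (n := n)
    rw [commutatorElement_def] at h
    rw [zpow_neg, zpow_natCast, ← h]
    group
  calc y * x ^ a = (y * x * y⁻¹) ^ a * y := by rw [conj_zpow]; group
    _ = z ^ (-(n * a)) * (x ^ a * y) := by
      rw [hconj, (commute_z_x.zpow_left _).mul_zpow, ← zpow_mul, neg_mul, mul_assoc]
    _ = x ^ a * y * z ^ (-(n * a)) := zpow_z_mul_comm _ _

lemma lift_eq_one_of_mem_gnRels :
    ∀ r ∈ gnRels n, FreeGroup.lift ![(⟨1, 0, 0⟩ : Heis n), ⟨0, 1, 0⟩, Heis.z] r = 1 := by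
  rintro r (rfl | rfl | rfl) <;>
    simp only [commutatorElement_def, ← zpow_natCast, map_mul, map_inv, map_zpow,
      FreeGroup.lift_apply_of, Matrix.cons_val_zero, Matrix.cons_val_one, Matrix.cons_val,
      Heis.z_zpow] <;>
    ext <;> simp [Heis.z]

def toHeis : Gn n →* Heis n := PresentedGroup.toGroup lift_eq_one_of_mem_gnRels

lemma toHeis_x : toHeis (x : Gn n) = ⟨1, 0, 0⟩ := PresentedGroup.toGroup.of _
lemma toHeis_y : toHeis (y : Gn n) = ⟨0, 1, 0⟩ := PresentedGroup.toGroup.of _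
lemma toHeis_z : toHeis (z : Gn n) = Heis.z := PresentedGroup.toGroup.of _

def normalForm (v : Heis n) : Gn n := x ^ v.a * y ^ v.b * z ^ v.c

lemma toHeis_normalForm (v : Heis n) : toHeis (normalForm v) = v := by
  simp only [normalForm, map_mul, map_zpow, toHeis_x, toHeis_y, toHeis_z, Heis.z_zpow]
  rw [Heis.zpow_eq_of_a_mul_b_eq_zero (by simp), Heis.zpow_eq_of_a_mul_b_eq_zero (by simp)]
  ext <;> simp

lemma normalForm_toHeis_mul (g : Gn n) (v : Heis n) :
    normalForm (toHeis g * v) = g * normalForm v := by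
  revert v
  -- The `g` satisfying the claim for all `v` form a subgroup, so it suffices to treat generators.
  refine PresentedGroup.generated_by _
    { carrier := {g | ∀ v, normalForm (toHeis g * v) = g * normalForm v}
      one_mem' := by simp
      mul_mem' := fun {g h} hg hh v => by rw [map_mul, mul_assoc, hg, hh, mul_assoc]
      inv_mem' := fun {g} hg v => by
        rw [eq_inv_mul_iff_mul_eq, ← hg, ← mul_assoc, ← map_mul, mul_inv_cancel, map_one,
          one_mul] } (fun j => ?_) g
  fin_cases j <;> intro v
  · show normalForm (toHeis x * v) = x * normalForm v
    simp [normalForm, toHeis_x, zpow_one_add, mul_assoc]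
  · show normalForm (toHeis y * v) = y * normalForm v
    simp only [normalForm, toHeis_y, Heis.mul_a, Heis.mul_b, Heis.mul_c]
    rw [← mul_assoc, ← mul_assoc, y_mul_x_zpow, mul_assoc _ (z ^ _), zpow_z_mul_comm]
    group
  · show normalForm (toHeis z * v) = z * normalForm v
    simp only [normalForm, toHeis_z, Heis.z, Heis.mul_a, Heis.mul_b, Heis.mul_c]
    rw [← mem_center_iff.1 z_mem_center]
    group

lemma normalForm_toHeis (g : Gn n) : normalForm (toHeis g) = g := by
  simpa [normalForm] using normalForm_toHeis_mul g 1

def mulEquivHeis : Gn n ≃* Heis n :=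
  { toHeis with
    invFun := normalForm
    left_inv := normalForm_toHeis
    right_inv := toHeis_normalForm }

end Gn

/-- for `n ≥ 1`, the group `G_n` is not IIPP. -/
theorem stmt16 (n : ℕ) (hn : 1 ≤ n) : ¬ IIPP (Gn n) :=
  fun h => Heis.not_iipp (by omega) (h.of_mulEquiv Gn.mulEquivHeis)
end

section
/- If a group Γ contains an infinite acentral subgroup A of infinite index, then Γ is not presentable by products: there do not exist element-wise commuting infinite subgroups Γ₁, Γ₂ of Γ whose product Γ₁Γ₂ has finite index in Γ. -/
/-!
Suppose `H` and `K` are commuting infinite subgroups with `H ⊔ K` of finite index. Since `A` is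
infinite, it meets `H ⊔ K` in some `a = h * k ≠ 1`. Both `h` and `k` commute with `a`, so they
lie in `A` by acentrality, and one of them, say `h`, is nontrivial. Then `K` centralizes `h`, so
`K ≤ A`; a nontrivial element of `K` is centralized by `H`, so `H ≤ A` as well. Hence `A` contains
`H ⊔ K` and has finite index.
-/

/-- A subgroup `A ⊆ Γ` is acentral if the centralizer of every nontrivial element of
`A` is contained in `A`. -/
def Acentral {G : Type*} [Group G] (A : Subgroup G) : Prop :=
  ∀ g ∈ A, g ≠ 1 → Subgroup.centralizer {g} ≤ A

open Subgroup

namespace Subgroup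

variable {G : Type*} [Group G]

theorem mem_sup_of_le_centralizer {H K : Subgroup G} (hHK : H ≤ centralizer K) {x : G} :
    x ∈ H ⊔ K ↔ ∃ h ∈ H, ∃ k ∈ K, h * k = x := by
  rw [← SetLike.mem_coe, coe_mul_of_left_le_normalizer_right H K
    (hHK.trans (centralizer_le_normalizer _)), Set.mem_mul]
  rfl

theorem exists_mem_inf_ne_one_of_finiteIndex (A S : Subgroup G) [Infinite A] [S.FiniteIndex] :
    ∃ g ∈ A ⊓ S, g ≠ 1 := by
  suffices ¬ Disjoint A S by simpa [disjoint_def, and_assoc] using this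
  intro hdisj
  have hindex := FiniteIndex.index_ne_zero (H := S.subgroupOf A)
  rw [subgroupOf_eq_bot.mpr hdisj.symm, index_bot] at hindex
  have : Finite A := Nat.finite_of_card_ne_zero hindex
  exact not_finite A

end Subgroup

namespace Acentral

variable {G : Type*} [Group G] {A H K : Subgroup G}

theorem sup_le (hA : Acentral A) (hHK : H ≤ centralizer K) [Infinite K] {g : G}
    (hgH : g ∈ H) (hgA : g ∈ A) (hg : g ≠ 1) : H ⊔ K ≤ A := by
  have hKA : K ≤ A := fun k hk ↦ hA g hgA hg (mem_centralizer_singleton_iff.mpr (hHK hgH k hk))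
  obtain ⟨k, hk, hk1⟩ := K.nontrivial_iff_exists_ne_one.mp inferInstance
  have hHA : H ≤ A := fun h hh ↦
    hA k (hKA hk) hk1 (mem_centralizer_singleton_iff.mpr (hHK hh k hk).symm)
  exact _root_.sup_le hHA hKA

theorem sup_le_of_mem_sup (hA : Acentral A) (hHK : H ≤ centralizer K) [Infinite H] [Infinite K]
    {a : G} (haHK : a ∈ H ⊔ K) (haA : a ∈ A) (ha : a ≠ 1) : H ⊔ K ≤ A := by
  obtain ⟨h, hh, k, hk, rfl⟩ := (mem_sup_of_le_centralizer hHK).mp haHK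
  have hkh : k * h = h * k := hHK hh k hk
  by_cases h1 : h = 1
  · subst h1
    rw [one_mul] at haA ha
    rw [_root_.sup_comm]
    exact hA.sup_le (le_centralizer_iff.mp hHK) hk haA ha
  · have hhA : h ∈ A := hA _ haA ha <| mem_centralizer_singleton_iff.mpr <| by
      rw [mul_assoc, hkh, ← mul_assoc]
    exact hA.sup_le hHK hh hhA h1

end Acentral

/-- a group containing an infinite acentral subgroup of infinite index
is not presentable by products. -/
theorem stmt18 {G : Type*} [Group G] (A : Subgroup G)
    (hA : Acentral A) (hinf : Infinite ↥A) (hidx : A.index = 0) :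
    ¬ PresentableByProducts G := by
  rintro ⟨H, K, hcomm, hH, hK, hfin⟩
  have hHK : H ≤ centralizer K := fun h hh k hk ↦ (hcomm h hh k hk).symm
  obtain ⟨a, ⟨haA, haHK⟩, ha⟩ := exists_mem_inf_ne_one_of_finiteIndex A (H ⊔ K)
  have := finiteIndex_of_le (hA.sup_le_of_mem_sup hHK haHK haA ha)
  exact this.index_ne_zero hidx
end
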